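/- arXiv:1905.09974 — 4 statements merged into one kernel-verified Lean document; each statement's English description precedes it below -/
import Mathlib

section
/- Let G be a group and π : G → U(H) a unitary representation on a complex Hilbert space H. Then the following are equivalent: (a) there exist a finite subset K ⊆ G and ε > 0 such that for every ξ ∈ H, max_{g ∈ K} ‖π(g)ξ − ξ‖ ≥ ε‖ξ‖ (i.e. π has spectral gap); (b) there exists a finite nonempty subset K ⊆ G such that the operator norm of (1/|K|) ∑_{g ∈ K} π(g) is strictly less than 1. -/
/-!
If the averaging operator `T` over `K` has norm `< 1`, then `‖ξ - Tξ‖ ≥ (1 - ‖T‖)‖ξ‖`, and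
`ξ - Tξ` is the average of the `ξ - π g ξ`, so one of these is at least that long.

Conversely, add `1` to `K` and shrink `ε` to at most `2`. For `ξ ≠ 0` some `g ∈ K`, necessarily
`g ≠ 1`, moves `ξ` by at least `ε‖ξ‖`, so by the parallelogram law
`‖ξ + π g ξ‖ ≤ (2 - ε²/4)‖ξ‖`; bounding the remaining `n - 2` terms trivially gives
`‖Tξ‖ ≤ (1 - ε²/(4n))‖ξ‖`.
-/

open Finset

theorem norm_sum_le_of_norm_add_le {ι E : Type*} [DecidableEq ι] [SeminormedAddCommGroup E]
    {s : Finset ι} {v : ι → E} {r δ : ℝ} (hv : ∀ k ∈ s, ‖v k‖ ≤ r) {i j : ι}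
    (hi : i ∈ s) (hj : j ∈ s) (hij : i ≠ j) (hpair : ‖v i + v j‖ ≤ (2 - δ) * r) :
    ‖∑ k ∈ s, v k‖ ≤ (s.card - δ) * r := by
  have hj' : j ∈ s.erase i := mem_erase.2 ⟨hij.symm, hj⟩
  have hrest : ‖∑ k ∈ (s.erase i).erase j, v k‖ ≤ ((s.card : ℝ) - 2) * r :=
    calc ‖∑ k ∈ (s.erase i).erase j, v k‖
        ≤ ∑ k ∈ (s.erase i).erase j, ‖v k‖ := norm_sum_le _ _
      _ ≤ ∑ _k ∈ (s.erase i).erase j, r :=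
          sum_le_sum fun k hk => hv k (mem_of_mem_erase (mem_of_mem_erase hk))
      _ = ((s.card : ℝ) - 2) * r := by
          rw [sum_const, nsmul_eq_mul, ← card_erase_add_one hi, ← card_erase_add_one hj']
          push_cast
          ring
  rw [← add_sum_erase s v hi, ← add_sum_erase _ v hj', ← add_assoc]
  calc ‖v i + v j + ∑ k ∈ (s.erase i).erase j, v k‖
      ≤ ‖v i + v j‖ + ‖∑ k ∈ (s.erase i).erase j, v k‖ := norm_add_le _ _
    _ ≤ (s.card - δ) * r := by linarith

theorem norm_add_le_of_mul_norm_le_norm_sub {𝕜 F : Type*} [RCLike 𝕜] [NormedAddCommGroup F]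
    [InnerProductSpace 𝕜 F] {u v : F} {ε : ℝ} (hε₀ : 0 ≤ ε) (hε₂ : ε ≤ 2) (huv : ‖v‖ = ‖u‖)
    (hsub : ε * ‖u‖ ≤ ‖u - v‖) :
    ‖u + v‖ ≤ (2 - ε ^ 2 / 4) * ‖u‖ := by
  have hpar := parallelogram_law_with_norm 𝕜 u v
  have hsub_sq : (ε * ‖u‖) ^ 2 ≤ ‖u - v‖ ^ 2 := pow_le_pow_left₀ (by positivity) hsub 2
  have hcoef : 0 ≤ 2 - ε ^ 2 / 4 := by nlinarith
  refine le_of_pow_le_pow_left₀ two_ne_zero (by positivity) ?_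
  rw [huv] at hpar
  nlinarith [pow_nonneg hε₀ 4, sq_nonneg ‖u‖]

theorem exists_mem_mul_norm_le_norm_apply_sub {ι E : Type*} [NormedAddCommGroup E]
    [NormedSpace ℂ E] {K : Finset ι} (hK : K.Nonempty) (U : ι → E →L[ℂ] E) (ξ : E) :
    ∃ i ∈ K, (1 - ‖(K.card : ℝ)⁻¹ • ∑ i ∈ K, U i‖) * ‖ξ‖ ≤ ‖U i ξ - ξ‖ := by
  set T := (K.card : ℝ)⁻¹ • ∑ i ∈ K, U i
  have hcard : (K.card : ℝ) ≠ 0 := by exact_mod_cast hK.card_pos.ne'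
  have hsum : ∑ i ∈ K, (U i ξ - ξ) = (K.card : ℝ) • (T ξ - ξ) := by
    simp [T, sum_sub_distrib, smul_sub, smul_smul, hcard,
      ← Nat.cast_smul_eq_nsmul ℝ]
  have hTξ : (1 - ‖T‖) * ‖ξ‖ ≤ ‖T ξ - ξ‖ := by
    have := T.le_opNorm ξ
    have := norm_sub_norm_le ξ (T ξ)
    rw [norm_sub_rev] at this
    linarith
  refine exists_le_of_sum_le hK ?_
  calc ∑ _i ∈ K, (1 - ‖T‖) * ‖ξ‖ = K.card * ((1 - ‖T‖) * ‖ξ‖) := by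
        rw [sum_const, nsmul_eq_mul]
    _ ≤ K.card * ‖T ξ - ξ‖ := by gcongr
    _ = ‖∑ i ∈ K, (U i ξ - ξ)‖ := by rw [hsum, norm_smul, Real.norm_natCast]
    _ ≤ ∑ i ∈ K, ‖U i ξ - ξ‖ := norm_sum_le _ _

theorem norm_average_insert_one_lt_one {G H : Type*} [Group G] [DecidableEq G]
    [NormedAddCommGroup H] [InnerProductSpace ℂ H] [CompleteSpace H] (π : G →* unitary (H →L[ℂ] H))
    {K : Finset G} {ε : ℝ} (hε : 0 < ε)
    (hK : ∀ ξ : H, ∃ g ∈ K, ε * ‖ξ‖ ≤ ‖(π g : H →L[ℂ] H) ξ - ξ‖) :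
    ‖((insert 1 K).card : ℝ)⁻¹ • ∑ g ∈ insert 1 K, (π g : H →L[ℂ] H)‖ < 1 := by
  set n : ℝ := ((insert 1 K).card : ℝ)
  set ε' := min ε 2
  have hn : 1 ≤ n := Nat.one_le_cast.2 (insert_nonempty 1 K).card_pos
  have hε' : 0 < ε' := lt_min hε two_pos
  have hδ : ε' ^ 2 / 4 ≤ n := by nlinarith [min_le_right ε 2]
  suffices h : ‖n⁻¹ • ∑ g ∈ insert 1 K, (π g : H →L[ℂ] H)‖ ≤ 1 - ε' ^ 2 / 4 / n by
    have : 0 < ε' ^ 2 / 4 / n := by positivity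
    linarith
  refine ContinuousLinearMap.opNorm_le_bound _
    (sub_nonneg.2 ((div_le_one (by positivity)).2 hδ)) fun ξ => ?_
  obtain ⟨g, hgK, hg⟩ := hK ξ
  rcases eq_or_ne g 1 with rfl | hg1
  · have hξ : ξ = 0 := by
      simp only [map_one, OneMemClass.coe_one, one_apply_eq_self, sub_self,
        norm_zero] at hg
      exact norm_eq_zero.1 (le_antisymm (nonpos_of_mul_nonpos_right hg hε) (norm_nonneg ξ))
    simp [hξ]
  have hpair : ‖ξ + (π g : H →L[ℂ] H) ξ‖ ≤ (2 - ε' ^ 2 / 4) * ‖ξ‖ :=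
    norm_add_le_of_mul_norm_le_norm_sub (𝕜 := ℂ) hε'.le (min_le_right ε 2)
      (Unitary.norm_map (π g) ξ) (by
        rw [norm_sub_rev]
        exact (mul_le_mul_of_nonneg_right (min_le_left ε 2) (norm_nonneg ξ)).trans hg)
  have hsum := norm_sum_le_of_norm_add_le (v := fun h => (π h : H →L[ℂ] H) ξ)
    (fun h _ => (Unitary.norm_map (π h) ξ).le) (mem_insert_self 1 K)
    (mem_insert_of_mem hgK) hg1.symm (by simpa using hpair)
  calc ‖(n⁻¹ • ∑ g ∈ insert 1 K, (π g : H →L[ℂ] H)) ξ‖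
      = n⁻¹ * ‖∑ g ∈ insert 1 K, (π g : H →L[ℂ] H) ξ‖ := by
        rw [smul_apply, _root_.sum_apply, norm_smul,
          norm_inv, Real.norm_natCast]
    _ ≤ n⁻¹ * ((n - ε' ^ 2 / 4) * ‖ξ‖) := by gcongr
    _ = (1 - ε' ^ 2 / 4 / n) * ‖ξ‖ := by field_simp

/-- Spectral gap for a unitary representation is equivalent to some finite average of the
unitaries having operator norm strictly less than 1. -/
theorem stmt0 {G : Type*} [Group G] {H : Type*} [NormedAddCommGroup H]
    [InnerProductSpace ℂ H] [CompleteSpace H]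
    (π : G →* unitary (H →L[ℂ] H)) :
    (∃ (K : Finset G) (ε : ℝ), 0 < ε ∧
        ∀ ξ : H, ∃ g ∈ K, ε * ‖ξ‖ ≤ ‖(π g : H →L[ℂ] H) ξ - ξ‖) ↔
      (∃ K : Finset G, K.Nonempty ∧
        ‖(K.card : ℝ)⁻¹ • ∑ g ∈ K, (π g : H →L[ℂ] H)‖ < 1) := by
  classical
  constructor
  · rintro ⟨K, ε, hε, hK⟩
    exact ⟨insert 1 K, insert_nonempty 1 K, norm_average_insert_one_lt_one π hε hK⟩
  · rintro ⟨K, hK, hT⟩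
    exact ⟨K, _, sub_pos.2 hT, exists_mem_mul_norm_le_norm_apply_sub hK _⟩
end

section
/- Let G be a group acting on a set I, and let π : G → U(ℓ²(I)) be the associated permutation representation (π(g)δ_i = δ_{g·i}). If π has spectral gap, then for every unitary representation ρ : G → U(K) on a complex Hilbert space K, the tensor product representation π ⊗ ρ on ℓ²(I) ⊗ K also has spectral gap. (In other words, permutation representations with spectral gap automatically have stable spectral gap.) -/
/-- A unitary representation has spectral gap if some finite set of group elements uniformly
moves every vector. -/
def RepGap {G : Type*} [Group G] {H : Type*} [NormedAddCommGroup H]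
    [InnerProductSpace ℂ H] [CompleteSpace H]
    (π : G →* unitary (H →L[ℂ] H)) : Prop :=
  ∃ (F : Finset G) (ε : ℝ), 0 < ε ∧
    ∀ ξ : H, ∃ g ∈ F, ε * ‖ξ‖ ≤ ‖(π g : H →L[ℂ] H) ξ - ξ‖

/-- The permutation representation of `G` on `ℓ²(I)` associated to an action of `G` on `I`
has spectral gap. -/
def PermRepGap {G : Type*} [Group G] {I : Type*} (act : G → I → I) : Prop :=
  ∀ π : G →* unitary (lp (fun _ : I => ℂ) 2 →L[ℂ] lp (fun _ : I => ℂ) 2),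
    (∀ (g : G) (ξ : lp (fun _ : I => ℂ) 2) (i : I),
        ((π g : lp (fun _ : I => ℂ) 2 →L[ℂ] lp (fun _ : I => ℂ) 2) ξ) i = ξ (act g⁻¹ i)) →
    RepGap π

/-!
For `ξ ∈ ℓ²(I, K)` the pointwise norm `η i = ‖ξ i‖` lies in `ℓ²(I)` and has the same norm.
Since `ρ` is unitary, the permutation representation `π` moves `η` to the pointwise norm of
`σ g ξ`, and taking pointwise norms is `1`-Lipschitz on `ℓ²`, so `‖π g η - η‖ ≤ ‖σ g ξ - ξ‖`.
The spectral gap of `π`, tested on `η`, therefore gives one for `σ` with the same finite set and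
constant.
-/

open scoped ENNReal

section Reindex

variable {α β : Type*} {E : Type*} [NormedAddCommGroup E] {p : ℝ≥0∞}

theorem Memℓp.comp_equiv {f : β → E} (hf : Memℓp f p) (e : α ≃ β) : Memℓp (f ∘ e) p := by
  obtain rfl | rfl | hp := p.trichotomy
  · rw [memℓp_zero_iff] at hf ⊢
    exact hf.preimage e.injective.injOn
  · rw [memℓp_infty_iff] at hf ⊢
    rwa [← e.surjective.range_comp fun i => ‖f i‖] at hf
  · rw [memℓp_gen_iff hp] at hf ⊢
    exact e.summable_iff.2 hf

theorem lp.norm_comp_equiv [Fact (1 ≤ p)] (f : lp (fun _ : β => E) p) (e : α ≃ β) :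
    ‖(⟨f ∘ e, (lp.memℓp f).comp_equiv e⟩ : lp (fun _ : α => E) p)‖ = ‖f‖ := by
  obtain rfl | hp := eq_or_ne p ∞
  · rw [lp.norm_eq_ciSup, lp.norm_eq_ciSup]
    exact congrArg sSup (e.surjective.range_comp fun i => ‖f i‖)
  · have hp : 0 < p.toReal :=
      ENNReal.toReal_pos (zero_lt_one.trans_le Fact.out).ne' hp
    rw [lp.norm_eq_tsum_rpow hp, lp.norm_eq_tsum_rpow hp]
    exact congrArg (· ^ (1 / p.toReal)) (e.tsum_eq fun i => ‖f i‖ ^ p.toReal)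

variable (𝕜 : Type*) [NormedField 𝕜] [NormedSpace 𝕜 E] [Fact (1 ≤ p)]

def lp.funCongrLeft (e : α ≃ β) : lp (fun _ : β => E) p ≃ₗᵢ[𝕜] lp (fun _ : α => E) p where
  toFun f := ⟨f ∘ e, (lp.memℓp f).comp_equiv e⟩
  invFun f := ⟨f ∘ e.symm, (lp.memℓp f).comp_equiv e.symm⟩
  left_inv f := by ext i; simp
  right_inv f := by ext i; simp
  map_add' f g := rfl
  map_smul' c f := rfl
  norm_map' f := lp.norm_comp_equiv f e

@[simp]
theorem lp.funCongrLeft_apply (e : α ≃ β) (f : lp (fun _ : β => E) p) (i : α) :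
    lp.funCongrLeft 𝕜 e f i = f (e i) := rfl

end Reindex

section PermRep

variable (G α : Type*) [Group G] [MulAction G α] (𝕜 : Type*) (E : Type*) (p : ℝ≥0∞)
  [Fact (1 ≤ p)]

def lp.permRep [NormedField 𝕜] [NormedAddCommGroup E] [NormedSpace 𝕜 E] :
    G →* (lp (fun _ : α => E) p ≃ₗᵢ[𝕜] lp (fun _ : α => E) p) where
  toFun g := lp.funCongrLeft 𝕜 (MulAction.toPerm g⁻¹)
  map_one' := by ext; simp
  map_mul' g h := by ext; simp [mul_smul]

noncomputable def lp.unitaryPermRep [RCLike 𝕜] [NormedAddCommGroup E] [InnerProductSpace 𝕜 E]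
    [CompleteSpace E] :
    G →* unitary (lp (fun _ : α => E) 2 →L[𝕜] lp (fun _ : α => E) 2) :=
  Unitary.linearIsometryEquiv.symm.toMonoidHom.comp (lp.permRep G α 𝕜 E 2)

theorem lp.unitaryPermRep_apply [RCLike 𝕜] [NormedAddCommGroup E] [InnerProductSpace 𝕜 E]
    [CompleteSpace E] (g : G) (f : lp (fun _ : α => E) 2) (i : α) :
    ((lp.unitaryPermRep G α 𝕜 E g : lp (fun _ : α => E) 2 →L[𝕜] lp (fun _ : α => E) 2) f) i =
      f (g⁻¹ • i) :=
  rfl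

end PermRep

section PointwiseNorm

variable (𝕜 : Type*) [RCLike 𝕜] {α : Type*} {E : α → Type*} [∀ i, NormedAddCommGroup (E i)]
  {p : ℝ≥0∞}

def lp.pointwiseNorm (ξ : lp E p) : lp (fun _ : α => 𝕜) p :=
  ⟨fun i => (‖ξ i‖ : 𝕜), (lp.memℓp ξ).mono' fun i => by simp⟩

@[simp]
theorem lp.pointwiseNorm_apply (ξ : lp E p) (i : α) : lp.pointwiseNorm 𝕜 ξ i = (‖ξ i‖ : 𝕜) :=
  rfl

theorem lp.norm_pointwiseNorm (hp : p ≠ 0) (ξ : lp E p) : ‖lp.pointwiseNorm 𝕜 ξ‖ = ‖ξ‖ :=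
  le_antisymm (lp.norm_mono hp fun i => by simp) (lp.norm_mono hp fun i => by simp)

theorem lp.norm_pointwiseNorm_sub_le (hp : p ≠ 0) (ξ ζ : lp E p) :
    ‖lp.pointwiseNorm 𝕜 ξ - lp.pointwiseNorm 𝕜 ζ‖ ≤ ‖ξ - ζ‖ :=
  lp.norm_mono hp fun i => by
    rw [lp.coeFn_sub, lp.coeFn_sub, Pi.sub_apply, Pi.sub_apply, lp.pointwiseNorm_apply,
      lp.pointwiseNorm_apply, ← RCLike.ofReal_sub, RCLike.norm_ofReal]
    exact abs_norm_sub_norm_le _ _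

end PointwiseNorm

theorem RepGap.of_dominated {G : Type*} [Group G]
    {H : Type*} [NormedAddCommGroup H] [InnerProductSpace ℂ H] [CompleteSpace H]
    {H' : Type*} [NormedAddCommGroup H'] [InnerProductSpace ℂ H'] [CompleteSpace H']
    {π : G →* unitary (H →L[ℂ] H)} {σ : G →* unitary (H' →L[ℂ] H')} (hπ : RepGap π)
    (h : ∀ ξ : H', ∃ η : H, ‖ξ‖ ≤ ‖η‖ ∧
      ∀ g, ‖(π g : H →L[ℂ] H) η - η‖ ≤ ‖(σ g : H' →L[ℂ] H') ξ - ξ‖) :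
    RepGap σ := by
  obtain ⟨F, ε, hε, hF⟩ := hπ
  refine ⟨F, ε, hε, fun ξ => ?_⟩
  obtain ⟨η, hξη, hdom⟩ := h ξ
  obtain ⟨g, hg, hgη⟩ := hF η
  exact ⟨g, hg, (mul_le_mul_of_nonneg_left hξη hε.le).trans (hgη.trans (hdom g))⟩

/-- If the permutation representation `π` of `G ↷ I` on `ℓ²(I)` has spectral gap, then for every
unitary representation `ρ` of `G` on a Hilbert space `K`, the tensor product representation
`π ⊗ ρ` (realized on `ℓ²(I, K) ≅ ℓ²(I) ⊗ K`) has spectral gap. -/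
theorem stmt1 {G I : Type*} [Group G] [MulAction G I]
    (hgap : PermRepGap (fun (g : G) (i : I) => g • i))
    {K : Type*} [NormedAddCommGroup K] [InnerProductSpace ℂ K] [CompleteSpace K]
    (ρ : G →* unitary (K →L[ℂ] K))
    (σ : G →* unitary (lp (fun _ : I => K) 2 →L[ℂ] lp (fun _ : I => K) 2))
    (hσ : ∀ (g : G) (ξ : lp (fun _ : I => K) 2) (i : I),
        ((σ g : lp (fun _ : I => K) 2 →L[ℂ] lp (fun _ : I => K) 2) ξ) i
          = (ρ g : K →L[ℂ] K) (ξ (g⁻¹ • i))) :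
    RepGap σ := by
  have hπ := hgap (lp.unitaryPermRep G I ℂ ℂ) (lp.unitaryPermRep_apply G I ℂ ℂ)
  refine hπ.of_dominated fun ξ => ⟨lp.pointwiseNorm ℂ ξ,
    (lp.norm_pointwiseNorm ℂ two_ne_zero ξ).ge, fun g => ?_⟩
  have hequivariant :
      (lp.unitaryPermRep G I ℂ ℂ g : lp (fun _ : I => ℂ) 2 →L[ℂ] lp (fun _ : I => ℂ) 2)
        (lp.pointwiseNorm ℂ ξ) =
      lp.pointwiseNorm ℂ ((σ g : lp (fun _ : I => K) 2 →L[ℂ] lp (fun _ : I => K) 2) ξ) := by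
    ext i
    simp only [lp.unitaryPermRep_apply, lp.pointwiseNorm_apply, hσ, Unitary.norm_map]
  rw [hequivariant]
  exact lp.norm_pointwiseNorm_sub_le ℂ two_ne_zero _ _
end

section
/- Let Γ be a group with trivial center. Suppose Γ decomposes in two ways as an internal direct product: Γ = A × B = C × D, meaning A, B (resp. C, D) are normal subgroups with A ∩ B = {1} and AB = Γ (resp. C ∩ D = {1}, CD = Γ). Then A itself decomposes as the internal direct product A = (A ∩ C) × (A ∩ D). -/
/-- In a centerless group, two internal direct product decompositions `Γ = A × B = C × D`
admit a common refinement on `A`: `A = (A ∩ C) × (A ∩ D)`. -/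
theorem stmt5 {Γ : Type*} [Group Γ] (hZ : Subgroup.center Γ = ⊥)
    (A B C D : Subgroup Γ) [A.Normal] [B.Normal] [C.Normal] [D.Normal]
    (hAB : A ⊓ B = ⊥) (hABtop : ∀ g : Γ, ∃ a ∈ A, ∃ b ∈ B, g = a * b)
    (hCD : C ⊓ D = ⊥) (hCDtop : ∀ g : Γ, ∃ c ∈ C, ∃ d ∈ D, g = c * d) :
    (A ⊓ C) ⊓ (A ⊓ D) = ⊥ ∧ ∀ a ∈ A, ∃ x ∈ A ⊓ C, ∃ y ∈ A ⊓ D, a = x * y := by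
  have hcAB : ∀ x ∈ A, ∀ y ∈ B, x * y = y * x := fun x hx y hy =>
    Subgroup.commute_of_normal_of_disjoint A B ‹_› ‹_› (disjoint_iff.2 hAB) x y hx hy
  have hcCD : ∀ x ∈ C, ∀ y ∈ D, x * y = y * x := fun x hx y hy =>
    Subgroup.commute_of_normal_of_disjoint C D ‹_› ‹_› (disjoint_iff.2 hCD) x y hx hy
  constructor
  · rw [eq_bot_iff]
    intro x hx
    obtain ⟨⟨-, hxC⟩, -, hxD⟩ := hx
    have : x ∈ C ⊓ D := ⟨hxC, hxD⟩
    rwa [hCD] at this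
  · intro a ha
    obtain ⟨c, hc, d, hd, hacd⟩ := hCDtop a
    -- c commutes with every element of B
    have hcB : ∀ b ∈ B, c * b = b * c := by
      intro b hb
      obtain ⟨c', hc', d', hd', hb'⟩ := hCDtop b
      have hab : a * b = b * a := hcAB a ha b hb
      -- rearrange to get (c*c')*(d*d') = (c'*c)*(d'*d)
      have key : c * c' * (d * d') = c' * c * (d' * d) := by
        have h1 : c * d * (c' * d') = c * c' * (d * d') := by
          have := hcCD c' hc' d hd
          rw [mul_assoc c d, ← mul_assoc d c' d', ← this]; group
        have h2 : c' * d' * (c * d) = c' * c * (d' * d) := by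
          have := hcCD c hc d' hd'
          rw [mul_assoc c' d', ← mul_assoc d' c d, ← this]; group
        rw [← h1, ← h2, ← hacd, ← hb', hab]
      have hcc' : c * c' = c' * c := by
        have hu : (c' * c)⁻¹ * (c * c') ∈ C ⊓ D := by
          constructor
          · exact C.mul_mem (C.inv_mem (C.mul_mem hc' hc)) (C.mul_mem hc hc')
          · have : (c' * c)⁻¹ * (c * c') = (d' * d) * (d * d')⁻¹ := by
              rw [inv_mul_eq_iff_eq_mul, ← mul_assoc, ← key]; group
            rw [this]
            exact D.mul_mem (D.mul_mem hd' hd) (D.inv_mem (D.mul_mem hd hd'))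
        rw [hCD, Subgroup.mem_bot, inv_mul_eq_one] at hu
        exact hu.symm
      rw [hb', ← mul_assoc, hcc', mul_assoc, hcCD c hc d' hd', ← mul_assoc]
    -- write c = α * β with α ∈ A, β ∈ B; show β is central hence 1
    obtain ⟨α, hα, β, hβ, hcαβ⟩ := hABtop c
    have hβ1 : β = 1 := by
      have hcen : β ∈ Subgroup.center Γ := by
        rw [Subgroup.mem_center_iff]
        intro g
        obtain ⟨a', ha', b', hb'', hg⟩ := hABtop g
        have hβb' : β * b' = b' * β := by
          have h1 : α⁻¹ * c * b' = b' * (α⁻¹ * c) := by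
            have hca : Commute α b' := hcAB α hα b' hb''
            rw [mul_assoc, hcB b' hb'', ← mul_assoc, hca.inv_left.eq, mul_assoc]
          have hβeq : β = α⁻¹ * c := by rw [hcαβ, inv_mul_cancel_left]
          rw [hβeq, h1]
        have hβa' : a' * β = β * a' := hcAB a' ha' β hβ
        rw [hg, mul_assoc, ← hβb', ← mul_assoc, hβa', mul_assoc]
      rwa [hZ, Subgroup.mem_bot] at hcen
    have hcA : c ∈ A := by rw [hcαβ, hβ1, mul_one]; exact hα
    have hdA : d ∈ A := by
      have : d = c⁻¹ * a := by rw [hacd, inv_mul_cancel_left]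
      rw [this]; exact A.mul_mem (A.inv_mem hcA) ha
    exact ⟨c, ⟨hcA, hc⟩, d, ⟨hdA, hd⟩, hacd⟩
end

section
/- Let L₁,…,L_n and R₁,…,R_n be infinite ICC groups such that, for each of them, every normal subgroup of every finite-index subgroup is either finite or of finite index. Let H ≤ L₁ × ⋯ × L_n and K ≤ R₁ × ⋯ × R_n be finite-index subgroups and φ : H → K a group isomorphism. Then there exists a permutation σ of {1,…,n} such that for every i, the subgroup φ(L_i ∩ H) of R₁ × ⋯ × R_n is commensurable with R_{σ(i)} (each R_j being viewed as the j-th coordinate subgroup of the product). -/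
/-! The coordinate subgroups `Lᵢ ∩ H` are nontrivial, normal in `H` and commute pairwise, hence
so do their images `Mᵢ ≤ K`. The projection of `Mᵢ` to a factor `R_j` is normalized by the
finite-index projection of `K`, so by the dichotomy it is finite or of finite index. In an ICC
group a finite subgroup normalized by a finite-index subgroup is trivial, and so is the
centralizer of a finite-index subgroup. Hence every projection of `Mᵢ` is trivial or of finite
index, and for each `j` at most one `Mᵢ` projects nontrivially to `R_j`. Since `Mᵢ ≠ 1`, this
defines a permutation `σ`, and `Mᵢ` is a finite-index subgroup of `R_{σ i}`. -/

/-- A group is ICC if every nontrivial conjugacy class is infinite. -/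
def IsICC (G : Type*) [Group G] : Prop :=
  ∀ g : G, g ≠ 1 → (Set.range fun x : G => x * g * x⁻¹).Infinite

/-- The normal subgroup dichotomy (Margulis), inherited by finite-index subgroups: every
normal subgroup of every finite-index subgroup is finite or of finite index. -/
def NormalSubgroupDichotomy (G : Type*) [Group G] : Prop :=
  ∀ Λ : Subgroup G, Λ.FiniteIndex →
    ∀ N : Subgroup G, N ≤ Λ → (∀ g ∈ Λ, ∀ x ∈ N, g * x * g⁻¹ ∈ N) →
      (N : Set G).Finite ∨ N.FiniteIndex

open Subgroup Function

section ICC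

variable {G : Type*} [Group G]

theorem IsICC.eq_one_of_conj_mem_finite (hG : IsICC G) {Λ : Subgroup G} [Λ.FiniteIndex]
    {S : Set G} (hS : S.Finite) {x : G} (hx : ∀ g ∈ Λ, g * x * g⁻¹ ∈ S) : x = 1 := by
  by_contra hne
  -- conjugating `S` by coset representatives of `Λ` covers the conjugacy class of `x`
  refine hG x hne ((Set.finite_iUnion fun q : G ⧸ Λ =>
    hS.image fun y => q.out * y * q.out⁻¹).subset ?_)
  rintro _ ⟨g, rfl⟩
  obtain ⟨h, hh⟩ := QuotientGroup.mk_out_eq_mul Λ g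
  refine Set.mem_iUnion.mpr ⟨g, h⁻¹ * x * h, ?_, ?_⟩
  · simpa using hx h⁻¹ (inv_mem h.2)
  · simp [hh, mul_assoc]

theorem IsICC.eq_bot_of_finite (hG : IsICC G) {Λ F : Subgroup G} [Λ.FiniteIndex]
    (hF : (F : Set G).Finite) (hΛ : ∀ g ∈ Λ, ∀ x ∈ F, g * x * g⁻¹ ∈ F) : F = ⊥ :=
  (eq_bot_iff_forall F).2 fun x hx => hG.eq_one_of_conj_mem_finite hF fun g hg => hΛ g hg x hx

theorem IsICC.eq_bot_of_le_centralizer (hG : IsICC G) {C D : Subgroup G} [C.FiniteIndex]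
    (hD : D ≤ centralizer C) : D = ⊥ :=
  (eq_bot_iff_forall D).2 fun x hx =>
    hG.eq_one_of_conj_mem_finite (Λ := C) (Set.finite_singleton x) fun g hg => by
      simp [mem_centralizer_iff.mp (hD hx) g hg]

theorem NormalSubgroupDichotomy.eq_bot_or_finiteIndex (hdich : NormalSubgroupDichotomy G)
    (hG : IsICC G) {Λ N : Subgroup G} [hΛ : Λ.FiniteIndex] (hN : N ≤ Λ)
    (hconj : ∀ g ∈ Λ, ∀ x ∈ N, g * x * g⁻¹ ∈ N) : N = ⊥ ∨ N.FiniteIndex :=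
  (hdich Λ hΛ N hN hconj).imp_left fun hF => hG.eq_bot_of_finite hF hconj

end ICC

section Subgroups

variable {G G' : Type*} [Group G] [Group G']

theorem Subgroup.Normal.conj_mem_map {N : Subgroup G} (hN : N.Normal) (f : G →* G') :
    ∀ g ∈ f.range, ∀ x ∈ N.map f, g * x * g⁻¹ ∈ N.map f := by
  rintro _ ⟨g, rfl⟩ _ ⟨x, hx, rfl⟩
  exact ⟨g * x * g⁻¹, hN.conj_mem x hx g, by simp⟩

theorem Subgroup.comap_le_centralizer_comap {f : G →* G'} (hf : Injective f) {A B : Subgroup G'}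
    (hAB : A ≤ centralizer B) : A.comap f ≤ centralizer (B.comap f) :=
  fun x hx y hy => hf (by simpa using hAB hx (f y) hy)

theorem Subgroup.map_le_centralizer_map (f : G →* G') {A B : Subgroup G}
    (hAB : A ≤ centralizer B) : A.map f ≤ centralizer (B.map f) :=
  (map_mono hAB).trans ((map_centralizer_le_centralizer_image _ _).trans_eq (by rw [coe_map]))

instance Subgroup.finiteIndex_comap (f : G →* G') (H : Subgroup G') [H.FiniteIndex] :
    (H.comap f).FiniteIndex :=
  ⟨by rw [index_comap]; exact FiniteIndex.index_ne_zero⟩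

theorem Subgroup.ne_bot_of_finiteIndex [Infinite G] (H : Subgroup G) [hH : H.FiniteIndex] :
    H ≠ ⊥ := by
  rintro rfl
  exact hH.index_ne_zero (by rw [index_bot, Nat.card_eq_zero_of_infinite])

theorem Subgroup.commensurable_map_range {f : G →* G'} (hf : Injective f) (P : Subgroup G)
    [hP : P.FiniteIndex] : Commensurable (P.map f) f.range := by
  rw [f.range_eq_map, Commensurable, relIndex_map_map_of_injective _ _ hf,
    relIndex_map_map_of_injective _ _ hf, relIndex_top_right, relIndex_top_left]
  exact ⟨hP.index_ne_zero, one_ne_zero⟩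

end Subgroups

theorem exists_perm_rel_iff_eq_of_leftTotal_of_leftUnique {ι : Type*} [Finite ι]
    {r : ι → ι → Prop} (htotal : Relator.LeftTotal r) (hunique : Relator.LeftUnique r) :
    ∃ σ : Equiv.Perm ι, ∀ i j, r i j ↔ j = σ i := by
  choose f hf using htotal
  have hinj : Injective f := fun i i' h => hunique (hf i) (h ▸ hf i')
  refine ⟨Equiv.ofBijective f (Finite.injective_iff_bijective.mp hinj),
    fun i j => ⟨fun h => ?_, fun h => h ▸ hf i⟩⟩
  obtain ⟨i', rfl⟩ := Finite.injective_iff_surjective.mp hinj j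
  rw [hunique (hf i') h]
  rfl

section Pi

variable {ι : Type*} [DecidableEq ι] {R : ι → Type*} [∀ i, Group (R i)]

instance MonoidHom.normal_range_mulSingle (i : ι) : (MonoidHom.mulSingle R i).range.Normal where
  conj_mem := by
    rintro _ ⟨x, rfl⟩ g
    refine ⟨g i * x * (g i)⁻¹, funext fun j => ?_⟩
    obtain rfl | hj := eq_or_ne j i <;> simp [*]

theorem MonoidHom.range_mulSingle_le_centralizer {i i' : ι} (h : i ≠ i') :
    (MonoidHom.mulSingle R i).range ≤ centralizer (MonoidHom.mulSingle R i').range := by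
  rintro _ ⟨x, rfl⟩ _ ⟨y, rfl⟩
  exact (Pi.mulSingle_commute h x y).symm.eq

theorem Subgroup.commensurable_range_mulSingle {M : Subgroup (∀ i, R i)} {i : ι}
    (hM : ∀ j ≠ i, M.map (Pi.evalMonoidHom R j) = ⊥)
    [(M.map (Pi.evalMonoidHom R i)).FiniteIndex] :
    Commensurable M (MonoidHom.mulSingle R i).range := by
  have hsingle : ∀ x ∈ M, MonoidHom.mulSingle R i (x i) = x := fun x hx => funext fun j => by
    obtain rfl | hj := eq_or_ne j i
    · simp
    · have : x j ∈ M.map (Pi.evalMonoidHom R j) := mem_map_of_mem _ hx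
      simpa [hM j hj, Pi.mulSingle_eq_of_ne hj, eq_comm] using this
  have hM' : (M.map (Pi.evalMonoidHom R i)).map (MonoidHom.mulSingle R i) = M := by
    refine le_antisymm ?_ fun x hx => ⟨x i, mem_map_of_mem _ hx, hsingle x hx⟩
    rintro _ ⟨_, ⟨x, hx, rfl⟩, rfl⟩
    exact (hsingle x hx).symm ▸ hx
  rw [← hM']
  exact commensurable_map_range (Pi.mulSingle_injective i) _

theorem comap_subtype_range_mulSingle_ne_bot (i : ι) [Infinite (R i)] (H : Subgroup (∀ i, R i))
    [H.FiniteIndex] : (MonoidHom.mulSingle R i).range.comap H.subtype ≠ ⊥ := by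
  obtain ⟨a, ha, ha1⟩ := (H.comap (MonoidHom.mulSingle R i)).bot_or_exists_ne_one.resolve_left
    (ne_bot_of_finiteIndex _)
  intro h
  have := (eq_bot_iff_forall _).1 h ⟨_, ha⟩ ⟨a, rfl⟩
  exact ha1 (Pi.mulSingle_eq_one_iff.mp (congrArg Subtype.val this))

theorem exists_perm_commensurable_range_mulSingle [Finite ι] (hicc : ∀ j, IsICC (R j))
    (hdich : ∀ j, NormalSubgroupDichotomy (R j)) {K : Subgroup (∀ j, R j)} [K.FiniteIndex]
    (M : ι → Subgroup K) [∀ i, (M i).Normal]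
    (hcomm : Pairwise fun i i' => M i ≤ centralizer (M i')) (hM : ∀ i, M i ≠ ⊥) :
    ∃ σ : Equiv.Perm ι, ∀ i,
      Commensurable ((M i).map K.subtype) (MonoidHom.mulSingle R (σ i)).range := by
  let π (j : ι) : K →* R j := (Pi.evalMonoidHom R j).comp K.subtype
  have hπ (j : ι) : (π j).range.FiniteIndex := by
    rw [MonoidHom.range_comp, range_subtype]
    exact ⟨ne_zero_of_dvd_ne_zero FiniteIndex.index_ne_zero
      (index_map_dvd _ (Function.surjective_eval j))⟩
  have hdichP (i j : ι) : (M i).map (π j) = ⊥ ∨ ((M i).map (π j)).FiniteIndex :=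
    (hdich j).eq_bot_or_finiteIndex (hicc j) (map_le_range _ _)
      ((inferInstance : (M i).Normal).conj_mem_map _)
  have htotal : Relator.LeftTotal fun i j => (M i).map (π j) ≠ ⊥ := by
    intro i
    by_contra! h
    refine hM i ((eq_bot_iff_forall _).2 fun x hx => Subtype.ext (funext fun j => ?_))
    exact mem_bot.mp (h j ▸ mem_map_of_mem (π j) hx)
  have hunique : Relator.LeftUnique fun i j => (M i).map (π j) ≠ ⊥ := by
    intro i i' j hi hi'
    by_contra hne
    have := (hdichP i' j).resolve_left hi'
    refine hi ((hicc j).eq_bot_of_le_centralizer (C := (M i').map (π j)) ?_)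
    exact map_le_centralizer_map _ (hcomm hne)
  obtain ⟨σ, hσ⟩ := exists_perm_rel_iff_eq_of_leftTotal_of_leftUnique htotal hunique
  refine ⟨σ, fun i => ?_⟩
  have : (((M i).map K.subtype).map (Pi.evalMonoidHom R (σ i))).FiniteIndex := by
    rw [map_map]
    exact (hdichP i (σ i)).resolve_left ((hσ i (σ i)).2 rfl)
  refine commensurable_range_mulSingle fun j hj => ?_
  rw [map_map]
  exact not_not.mp (mt (hσ i j).1 hj)

end Pi

theorem stmt14_general {n : ℕ} (L R : Fin n → Type*) [∀ i, Group (L i)] [∀ i, Group (R i)]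
    (hLinf : ∀ i, Infinite (L i))
    (hRicc : ∀ i, IsICC (R i))
    (hRdich : ∀ i, NormalSubgroupDichotomy (R i))
    (H : Subgroup (∀ i, L i)) (K : Subgroup (∀ i, R i))
    (hH : H.FiniteIndex) (hK : K.FiniteIndex)
    (φ : H ≃* K) :
    ∃ σ : Equiv.Perm (Fin n), ∀ i : Fin n,
      Subgroup.Commensurable
        (Subgroup.map (K.subtype.comp φ.toMonoidHom)
          (Subgroup.comap H.subtype (MonoidHom.mulSingle L i).range))
        (MonoidHom.mulSingle R (σ i)).range := by
  let M (i : Fin n) : Subgroup K :=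
    ((MonoidHom.mulSingle L i).range.comap H.subtype).map φ.toMonoidHom
  have (i : Fin n) : (M i).Normal := (normal_comap _).map _ φ.surjective
  have hcomm : Pairwise fun i i' => M i ≤ centralizer (M i') := fun i i' h =>
    map_le_centralizer_map _
      (comap_le_centralizer_comap H.subtype_injective (MonoidHom.range_mulSingle_le_centralizer h))
  have hM (i : Fin n) : M i ≠ ⊥ :=
    (map_eq_bot_iff_of_injective _ φ.injective).not.mpr (comap_subtype_range_mulSingle_ne_bot i H)
  obtain ⟨σ, hσ⟩ := exists_perm_commensurable_range_mulSingle hRicc hRdich M hcomm hM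
  exact ⟨σ, fun i => by simpa only [M, map_map] using hσ i⟩

/-- Permutation lemma for products of (abstract) higher rank lattices: an isomorphism between
finite-index subgroups `H ≤ L₁ × ⋯ × Lₙ` and `K ≤ R₁ × ⋯ × Rₙ` matches, up to a permutation
`σ`, the subgroup `φ(Lᵢ ∩ H)` with the coordinate subgroup `R_{σ(i)}` up to commensurability. -/
theorem stmt14 {n : ℕ} (L R : Fin n → Type*) [∀ i, Group (L i)] [∀ i, Group (R i)]
    (hLinf : ∀ i, Infinite (L i)) (hRinf : ∀ i, Infinite (R i))
    (hLicc : ∀ i, IsICC (L i)) (hRicc : ∀ i, IsICC (R i))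
    (hLdich : ∀ i, NormalSubgroupDichotomy (L i))
    (hRdich : ∀ i, NormalSubgroupDichotomy (R i))
    (H : Subgroup (∀ i, L i)) (K : Subgroup (∀ i, R i))
    (hH : H.FiniteIndex) (hK : K.FiniteIndex)
    (φ : H ≃* K) :
    ∃ σ : Equiv.Perm (Fin n), ∀ i : Fin n,
      Subgroup.Commensurable
        (Subgroup.map (K.subtype.comp φ.toMonoidHom)
          (Subgroup.comap H.subtype (MonoidHom.mulSingle L i).range))
        (MonoidHom.mulSingle R (σ i)).range :=
  stmt14_general L R hLinf hRicc hRdich H K hH hK φ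
end
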